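/- Reductions of elaborated values: if · ⊢ₑ v : A ▷ e' where v is a value in the equi-recursive language, then there exists a λᵘFi value v' such that e' ↪* v' and · ⊢ₑ v : A ▷ v'. -/

import Mathlib

/-- Types: Int, Top, arrow, de Bruijn type variables, and recursive types μ. -/
inductive Ty : Type
| int : Ty
| top : Ty
| arrow : Ty → Ty → Ty
| var : Nat → Ty
| mu : Ty → Ty
deriving DecidableEq

/-- Shifting of de Bruijn type variables. -/
def tshift (d c : Nat) : Ty → Ty
| .int => .int
| .top => .top
| .arrow A B => .arrow (tshift d c A) (tshift d c B)
| .var n => if n < c then .var n else .var (n + d)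
| .mu A => .mu (tshift d (c+1) A)

/-- Capture-avoiding substitution of type S for variable k. -/
def tsubst (k : Nat) (S : Ty) : Ty → Ty
| .int => .int
| .top => .top
| .arrow A B => .arrow (tsubst k S A) (tsubst k S B)
| .var n => if n = k then S else if k < n then .var (n-1) else .var n
| .mu A => .mu (tsubst (k+1) (tshift 1 0 S) A)

/-- Well-formedness: all free type variables are below n. -/
def Ty.wf : Nat → Ty → Prop
| _, .int => True
| _, .top => True
| n, .arrow A B => A.wf n ∧ B.wf n
| n, .var i => i < n
| n, .mu A => A.wf (n+1)

/-- Brandt–Henglein inductive equi-recursive type equality H ⊢ A ≐ B. -/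
inductive TyEq : List (Ty × Ty) → Ty → Ty → Prop
| assump : (A, B) ∈ H → TyEq H A B
| refl : TyEq H A A
| trans : TyEq H A B → TyEq H B C → TyEq H A C
| symm : TyEq H A B → TyEq H B A
| unfold : TyEq H (.mu A) (tsubst 0 (.mu A) A)
| arrfix : TyEq ((Ty.arrow A1 A2, Ty.arrow B1 B2) :: H) A1 B1 →
           TyEq ((Ty.arrow A1 A2, Ty.arrow B1 B2) :: H) A2 B2 →
           TyEq H (.arrow A1 A2) (.arrow B1 B2)

/-- Cast operators, with de Bruijn cast variables (bound by cfix). -/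
inductive Cast : Type
| cvar : Nat → Cast
| id : Cast
| fold : Ty → Cast
| unfold : Ty → Cast
| arrow : Cast → Cast → Cast
| seq : Cast → Cast → Cast
| cfix : Cast → Cast
deriving DecidableEq

/-- The dual (reverse) cast ¬c. -/
def Cast.dual : Cast → Cast
| .cvar i => .cvar i
| .id => .id
| .fold A => .unfold A
| .unfold A => .fold A
| .arrow c1 c2 => .arrow c1.dual c2.dual
| .seq c1 c2 => .seq c2.dual c1.dual
| .cfix c => .cfix c.dual

/-- Shifting of cast variables. -/
def cshift (d c : Nat) : Cast → Cast
| .cvar n => if n < c then .cvar n else .cvar (n+d)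
| .id => .id
| .fold A => .fold A
| .unfold A => .unfold A
| .arrow c1 c2 => .arrow (cshift d c c1) (cshift d c c2)
| .seq c1 c2 => .seq (cshift d c c1) (cshift d c c2)
| .cfix c1 => .cfix (cshift d (c+1) c1)

/-- Capture-avoiding substitution of a cast for cast variable k. -/
def csubst (k : Nat) (s : Cast) : Cast → Cast
| .cvar n => if n = k then s else if k < n then .cvar (n-1) else .cvar n
| .id => .id
| .fold A => .fold A
| .unfold A => .unfold A
| .arrow c1 c2 => .arrow (csubst k s c1) (csubst k s c2)
| .seq c1 c2 => .seq (csubst k s c1) (csubst k s c2)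
| .cfix c1 => .cfix (csubst (k+1) (cshift 1 0 s) c1)

/-- Type casting judgment 𝔼 ⊢ A ↪ B : c (cast context as de Bruijn list). -/
inductive TypCast : List (Ty × Ty) → Ty → Ty → Cast → Prop
| id : TypCast E A A .id
| arrow : TypCast E A1 B1 c1 → TypCast E A2 B2 c2 →
    TypCast E (.arrow A1 A2) (.arrow B1 B2) (.arrow c1 c2)
| unfold : TypCast E (.mu A) (tsubst 0 (.mu A) A) (.unfold (.mu A))
| fold : TypCast E (tsubst 0 (.mu A) A) (.mu A) (.fold (.mu A))
| seq : TypCast E A B c1 → TypCast E B C c2 → TypCast E A C (.seq c1 c2)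
| var : E[n]? = some (A, B) → TypCast E A B (.cvar n)
| fix : TypCast ((Ty.arrow A1 A2, Ty.arrow B1 B2) :: E)
           (.arrow A1 A2) (.arrow B1 B2) (.arrow c1 c2) →
        TypCast E (.arrow A1 A2) (.arrow B1 B2) (.cfix (.arrow c1 c2))

/-- Terms of λᵘFi (de Bruijn term variables). -/
inductive Tm : Type
| var : Nat → Tm
| lit : Int → Tm
| app : Tm → Tm → Tm
| abs : Ty → Tm → Tm
| cast : Cast → Tm → Tm
deriving DecidableEq

def shiftTm (d c : Nat) : Tm → Tm
| .var n => if n < c then .var n else .var (n+d)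
| .lit n => .lit n
| .app a b => .app (shiftTm d c a) (shiftTm d c b)
| .abs A e => .abs A (shiftTm d (c+1) e)
| .cast cc e => .cast cc (shiftTm d c e)

/-- Capture-avoiding term substitution. -/
def substTm (k : Nat) (s : Tm) : Tm → Tm
| .var n => if n = k then s else if k < n then .var (n-1) else .var n
| .lit n => .lit n
| .app a b => .app (substTm k s a) (substTm k s b)
| .abs A e => .abs A (substTm (k+1) (shiftTm 1 0 s) e)
| .cast cc e => .cast cc (substTm k s e)

/-- Values of λᵘFi. -/
inductive Value : Tm → Prop
| lit : Value (.lit n)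
| abs : Value (.abs A e)
| fold : Value v → Value (.cast (.fold A) v)
| arrow : Value v → Value (.cast (.arrow c1 c2) v)

/-- Call-by-value reduction of λᵘFi, including the cast push rules. -/
inductive Step : Tm → Tm → Prop
| beta : Value v → Step (.app (.abs A e) v) (substTm 0 v e)
| appl : Step e1 e1' → Step (.app e1 e2) (.app e1' e2)
| appr : Value v → Step e2 e2' → Step (.app v e2) (.app v e2')
| cast : Step e e' → Step (.cast c e) (.cast c e')
| castId : Value v → Step (.cast .id v) v
| castArr : Value v1 → Value v2 →
    Step (.app (.cast (.arrow c1 c2) v1) v2)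
         (.cast c2 (.app v1 (.cast c1.dual v2)))
| castSeq : Step (.cast (.seq c1 c2) e) (.cast c2 (.cast c1 e))
| castElim : Value v → Step (.cast (.unfold A) (.cast (.fold B) v)) v
| castFix : Step (.cast (.cfix c) e) (.cast (csubst 0 (.cfix c) c) e)

/-- Equi-recursive (cast-free) call-by-value reduction. -/
inductive EStep : Tm → Tm → Prop
| beta : Value v → EStep (.app (.abs A e) v) (substTm 0 v e)
| appl : EStep e1 e1' → EStep (.app e1 e2) (.app e1' e2)
| appr : Value v → EStep e2 e2' → EStep (.app v e2) (.app v e2')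

/-- Erasure of casts. -/
def erase : Tm → Tm
| .var n => .var n
| .lit n => .lit n
| .app a b => .app (erase a) (erase b)
| .abs A e => .abs A (erase e)
| .cast _ e => erase e

/-- Typing of λᵘFi. -/
inductive Typing : List Ty → Tm → Ty → Prop
| var : G[n]? = some A → Typing G (.var n) A
| lit : Typing G (.lit n) .int
| abs : Typing (A :: G) e B → Typing G (.abs A e) (.arrow A B)
| app : Typing G e1 (.arrow A B) → Typing G e2 A → Typing G (.app e1 e2) B
| cast : Typing G e A → TypCast [] A B c → Typing G (.cast c e) B

/-- Equi-recursive typing with elaboration Γ ⊢ₑ e : A ▷ e'. -/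
inductive ETyping : List Ty → Tm → Ty → Tm → Prop
| var : G[n]? = some A → ETyping G (.var n) A (.var n)
| lit : ETyping G (.lit n) .int (.lit n)
| abs : ETyping (A :: G) e B e' → ETyping G (.abs A e) (.arrow A B) (.abs A e')
| app : ETyping G e1 (.arrow A B) e1' → ETyping G e2 A e2' →
        ETyping G (.app e1 e2) B (.app e1' e2')
| eq : ETyping G e A e' → TypCast [] A B c → ETyping G e B (.cast c e')

/-- Iso-recursive Amber subtyping (de Bruijn presentation), n counts bound variable pairs. -/
inductive AmberSub : Nat → Ty → Ty → Prop
| top : Ty.wf n A → AmberSub n A .top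
| int : AmberSub n .int .int
| var : i < n → AmberSub n (.var i) (.var i)
| self : Ty.wf n (.mu A) → AmberSub n (.mu A) (.mu A)
| arrow : AmberSub n B1 A1 → AmberSub n A2 B2 → AmberSub n (.arrow A1 A2) (.arrow B1 B2)
| murec : AmberSub (n+1) A B → AmberSub n (.mu A) (.mu B)

/-- Typing of λᵘ<:Fi: λᵘFi typing plus subsumption. -/
inductive STyping : List Ty → Tm → Ty → Prop
| var : G[n]? = some A → STyping G (.var n) A
| lit : STyping G (.lit n) .int
| abs : STyping (A :: G) e B → STyping G (.abs A e) (.arrow A B)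
| app : STyping G e1 (.arrow A B) → STyping G e2 A → STyping G (.app e1 e2) B
| cast : STyping G e A → TypCast [] A B c → STyping G (.cast c e) B
| sub : STyping G e A → AmberSub 0 A B → STyping G e B

/-- Divergence under a reduction relation. -/
def Diverges (R : Tm → Tm → Prop) (e : Tm) : Prop :=
  ∀ e', Relation.ReflTransGen R e e' → ∃ e'', R e' e''

/-! The elaboration of a value is a λᵘFi value under a stack of casts, so it suffices that a cast
`c : A ↪ B` applied to a value elaborating `v` at `A` reduces to a value elaborating `v` at `B`.
This goes by induction on the casting derivation: identity casts vanish, sequences split,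
`fold` and arrow casts are already values, `unfold` cancels the `fold` that every value of a
μ-type carries, and a fixpoint cast unrolls once, remaining well-typed by the substitution lemma
for cast variables. -/

open Relation

lemma cshift_cshift (s : Cast) (d k c : Nat) :
    cshift d c (cshift k c s) = cshift (k + d) c s := by
  induction s generalizing c with
  | cvar n =>
    by_cases h : n < c
    · simp [cshift, h]
    · simp [cshift, h, show ¬ n + k < c by omega, Nat.add_assoc]
  | arrow _ _ ih₁ ih₂ | seq _ _ ih₁ ih₂ => simp [cshift, ih₁, ih₂]
  | cfix _ ih => simp [cshift, ih]
  | _ => rfl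

lemma cshift_zero (s : Cast) (c : Nat) : cshift 0 c s = s := by
  induction s generalizing c with
  | cvar n => by_cases h : n < c <;> simp [cshift, h]
  | arrow _ _ ih₁ ih₂ | seq _ _ ih₁ ih₂ => simp [cshift, ih₁, ih₂]
  | cfix _ ih => simp [cshift, ih]
  | _ => rfl

namespace TypCast

theorem weaken {F E E' : List (Ty × Ty)} {A B : Ty} {c : Cast}
    (h : TypCast (F ++ E) A B c) :
    TypCast (F ++ E' ++ E) A B (cshift E'.length F.length c) := by
  generalize hG : F ++ E = G at h
  induction h generalizing F with
  | id => exact id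
  | arrow _ _ ih₁ ih₂ => exact arrow (ih₁ hG) (ih₂ hG)
  | unfold => exact unfold
  | fold => exact fold
  | seq _ _ ih₁ ih₂ => exact seq (ih₁ hG) (ih₂ hG)
  | @var _ n _ _ hn =>
    subst hG
    by_cases hlt : n < F.length
    · rw [List.getElem?_append_left hlt] at hn
      simp only [cshift, if_pos hlt]
      exact var (by rw [List.append_assoc, List.getElem?_append_left hlt, hn])
    · rw [List.getElem?_append_right (by omega)] at hn
      simp only [cshift, if_neg hlt]
      refine var ?_
      rw [List.getElem?_append_right (by simp; omega), ← hn]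
      simp only [List.length_append]
      congr 1
      omega
  | fix _ ih =>
    exact fix (ih (F := _ :: F) (by simp [hG]))

theorem subst {F E : List (Ty × Ty)} {A B C D : Ty} {c s : Cast}
    (h : TypCast (F ++ (A, B) :: E) C D c) (hs : TypCast E A B s) :
    TypCast (F ++ E) C D (csubst F.length (cshift F.length 0 s) c) := by
  generalize hG : F ++ (A, B) :: E = G at h
  induction h generalizing F with
  | id => exact id
  | arrow _ _ ih₁ ih₂ => exact arrow (ih₁ hG) (ih₂ hG)
  | unfold => exact unfold
  | fold => exact fold
  | seq _ _ ih₁ ih₂ => exact seq (ih₁ hG) (ih₂ hG)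
  | @var _ n _ _ hn =>
    subst hG
    rcases lt_trichotomy n F.length with hlt | rfl | hgt
    · rw [List.getElem?_append_left hlt] at hn
      simp only [csubst, if_neg hlt.ne, if_neg (lt_asymm hlt)]
      exact var (by rw [List.getElem?_append_left hlt, hn])
    · simp only [List.getElem?_append_right le_rfl, Nat.sub_self, List.getElem?_cons_zero,
        Option.some.injEq, Prod.mk.injEq] at hn
      obtain ⟨rfl, rfl⟩ := hn
      simpa [csubst] using weaken (F := []) (E' := F) hs
    · rw [List.getElem?_append_right hgt.le, List.getElem?_cons,
        if_neg (by omega), show n - F.length - 1 = n - 1 - F.length by omega] at hn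
      simp only [csubst, if_neg hgt.ne', if_pos hgt]
      exact var (by rwa [List.getElem?_append_right (by omega)])
  | @fix A₁ A₂ B₁ B₂ _ _ _ _ ih =>
    have h' := ih (F := (.arrow A₁ A₂, .arrow B₁ B₂) :: F) (by simp [hG])
    simp only [List.length_cons, csubst, cshift_cshift] at h' ⊢
    exact fix h'

end TypCast

lemma ETyping.exists_fold_of_mu {G : List Ty} {v e : Tm} {A : Ty}
    (he : ETyping G v (.mu A) e) (hv : Value e) :
    ∃ w, e = .cast (.fold (.mu A)) w ∧ Value w ∧ ETyping G v (tsubst 0 (.mu A) A) w := by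
  cases he with
  | var | app => cases hv
  | eq he' hc =>
    generalize hB : Ty.mu A = B at hc
    cases hv with
    | fold hw => cases hc; cases hB; exact ⟨_, rfl, hw, he'⟩
    | arrow => cases hc; cases hB

lemma reflTransGen_step_cast {e e' : Tm} (c : Cast) (h : ReflTransGen Step e e') :
    ReflTransGen Step (.cast c e) (.cast c e') :=
  h.lift (Tm.cast c) fun _ _ => Step.cast

theorem TypCast.cast_value_reduces {A B : Ty} {c : Cast} (hc : TypCast [] A B c)
    {G : List Ty} {v w : Tm} (hw : Value w) (he : ETyping G v A w) :
    ∃ w', Value w' ∧ ReflTransGen Step (.cast c w) w' ∧ ETyping G v B w' := by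
  generalize hE : ([] : List (Ty × Ty)) = E at hc
  induction hc generalizing w with
  | id => exact ⟨w, hw, .single (Step.castId hw), he⟩
  | arrow hc₁ hc₂ =>
    subst hE
    exact ⟨_, Value.arrow hw, .refl, ETyping.eq he (arrow hc₁ hc₂)⟩
  | unfold =>
    obtain ⟨u, rfl, hu, he'⟩ := he.exists_fold_of_mu hw
    exact ⟨u, hu, .single (Step.castElim hu), he'⟩
  | fold => exact ⟨_, Value.fold hw, .refl, ETyping.eq he fold⟩
  | seq _ _ ih₁ ih₂ =>
    obtain ⟨w₁, hw₁, hs₁, he₁⟩ := ih₁ hw he hE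
    obtain ⟨w₂, hw₂, hs₂, he₂⟩ := ih₂ hw₁ he₁ hE
    exact ⟨w₂, hw₂, .head Step.castSeq ((reflTransGen_step_cast _ hs₁).trans hs₂), he₂⟩
  | var hn => subst hE; simp at hn
  | fix hc _ =>
    subst hE
    have unrolled := TypCast.subst (F := []) hc (fix hc)
    simp only [List.length_nil, cshift_zero, List.nil_append] at unrolled
    exact ⟨_, Value.arrow hw, .single Step.castFix, ETyping.eq he unrolled⟩

theorem ETyping.reduces_of_value {G : List Ty} {v e : Tm} {A : Ty}
    (h : ETyping G v A e) (hv : Value v) :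
    ∃ w, Value w ∧ ReflTransGen Step e w ∧ ETyping G v A w := by
  induction h with
  | var => cases hv
  | lit => exact ⟨_, Value.lit, .refl, lit⟩
  | abs h => exact ⟨_, Value.abs, .refl, abs h⟩
  | app => cases hv
  | eq _ hc ih =>
    obtain ⟨w, hw, hs, he⟩ := ih hv
    obtain ⟨w', hw', hs', he'⟩ := hc.cast_value_reduces hw he
    exact ⟨w', hw', (reflTransGen_step_cast _ hs).trans hs', he'⟩

/-- Elaborations of equi-recursive values reduce to λᵘFi values. -/
theorem elab_value_red (v e' : Tm) (A : Ty)
    (hv : Value v) (h : ETyping [] v A e') :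
    ∃ v', Value v' ∧ Relation.ReflTransGen Step e' v' ∧ ETyping [] v A v' :=
  h.reduces_of_value hv
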